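/- arXiv:math/0101188 — 2 statements merged into one kernel-verified Lean document; each statement's English description precedes it below -/
import Mathlib

section
/- For real ν and x > 0, the function ρ_ν satisfies the second-order differential equation (x^(ν+1) (x^(-ν) ρ_ν(x))')' = ρ_ν(x), where ρ_ν(x) = ∫₀^∞ t^(ν-1) e^(-t - x/t) dt. -/
/-! Differentiating under the integral sign gives `ρ_ν' = -ρ_{ν-1}`, and integrating
`d/dt (t^ν e^{-t-x/t})` over `(0, ∞)` gives the recurrence `ρ_{ν+1} = ν ρ_ν + x ρ_{ν-1}`.
Hence `x^{ν+1} (x^{-ν} ρ_ν)' = -ν ρ_ν - x ρ_{ν-1}`, whose derivative is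
`(ν - 1) ρ_{ν-1} + x ρ_{ν-2} = ρ_ν`. -/

open MeasureTheory Real Set

noncomputable def rho (ν x : ℝ) : ℝ :=
  ∫ t in Set.Ioi (0:ℝ), t ^ (ν - 1) * Real.exp (-t - x / t)

noncomputable def K (ν z : ℝ) : ℝ :=
  (1/2) * (z/2) ^ ν * ∫ t in Set.Ioi (0:ℝ), Real.exp (-t - z^2 / (4*t)) * t ^ (-ν - 1)

open Filter Topology

theorem Real.exp_neg_le_factorial_div_pow {u : ℝ} (hu : 0 < u) (n : ℕ) :
    exp (-u) ≤ n.factorial / u ^ n := by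
  rw [exp_neg, ← inv_div]
  exact inv_anti₀ (by positivity) (pow_div_factorial_le_exp _ hu.le n)

theorem continuousOn_rpow_mul_exp_neg_sub_div (a x : ℝ) :
    ContinuousOn (fun t : ℝ => t ^ a * exp (-t - x / t)) (Ioi 0) := by
  exact (continuousOn_id.rpow_const fun t ht => Or.inl (ne_of_gt ht)).mul
    (continuous_exp.comp_continuousOn
      (continuousOn_id.neg.sub (continuousOn_const.div continuousOn_id fun t ht => ne_of_gt ht)))

theorem integrableOn_rpow_mul_exp_neg_sub_div (a : ℝ) {x : ℝ} (hx : 0 < x) :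
    IntegrableOn (fun t : ℝ => t ^ a * exp (-t - x / t)) (Ioi 0) := by
  -- `exp (-x/t) ≤ n! (t/x)^n` turns the integrand into a convergent Gamma integrand near `0`.
  obtain ⟨n, hn⟩ := exists_nat_gt (-a)
  have hGamma :
      IntegrableOn (fun t : ℝ => n.factorial / x ^ n * (t ^ (a + n) * exp (-t))) (Ioi 0) := by
    refine Integrable.const_mul ?_ _
    have := Real.GammaIntegral_convergent (s := a + n + 1) (by linarith)
    simp only [add_sub_cancel_right, mul_comm (exp _)] at this
    exact this
  refine hGamma.mono'
    ((continuousOn_rpow_mul_exp_neg_sub_div a x).aestronglyMeasurable measurableSet_Ioi) ?_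
  filter_upwards [ae_restrict_mem measurableSet_Ioi] with t (ht : 0 < t)
  rw [norm_of_nonneg (by positivity)]
  calc t ^ a * exp (-t - x / t) = t ^ a * exp (-(x / t)) * exp (-t) := by
        rw [mul_assoc, ← exp_add]; ring_nf
    _ ≤ t ^ a * (n.factorial / (x / t) ^ n) * exp (-t) := by
        gcongr; exact Real.exp_neg_le_factorial_div_pow (div_pos hx ht) n
    _ = n.factorial / x ^ n * (t ^ (a + n) * exp (-t)) := by
        rw [rpow_add ht, rpow_natCast, div_pow]; field_simp

theorem tendsto_rpow_mul_exp_neg_sub_div_atTop (a x : ℝ) :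
    Tendsto (fun t : ℝ => t ^ a * exp (-t - x / t)) atTop (𝓝 0) := by
  have hdecay := tendsto_rpow_mul_exp_neg_mul_atTop_nhds_zero a 1 one_pos
  have hone : Tendsto (fun t : ℝ => exp (-(x / t))) atTop (𝓝 1) := by
    simpa using (tendsto_const_nhds.div_atTop tendsto_id).neg.rexp
  simpa [mul_assoc, ← exp_add, sub_eq_add_neg] using hdecay.mul hone

theorem tendsto_rpow_mul_exp_neg_sub_div_nhdsGT_zero (a : ℝ) {x : ℝ} (hx : 0 < x) :
    Tendsto (fun t : ℝ => t ^ a * exp (-t - x / t)) (𝓝[>] 0) (𝓝 0) := by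
  have hdecay :=
    (tendsto_rpow_mul_exp_neg_mul_atTop_nhds_zero (-a) x hx).comp tendsto_inv_nhdsGT_zero
  have hone : Tendsto (fun t : ℝ => exp (-t)) (𝓝[>] 0) (𝓝 1) := by
    simpa using (continuous_neg.rexp.tendsto 0).mono_left nhdsWithin_le_nhds
  have hprod := hdecay.mul hone
  rw [zero_mul] at hprod
  refine hprod.congr' ?_
  filter_upwards [self_mem_nhdsWithin] with t (ht : 0 < t)
  rw [Function.comp_apply, inv_rpow ht.le, rpow_neg ht.le, inv_inv, mul_assoc, ← exp_add]
  ring_nf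

theorem integral_Ioi_of_hasDerivAt_of_tendsto_nhdsGT {f f' : ℝ → ℝ} {a l m : ℝ}
    (hderiv : ∀ t ∈ Ioi a, HasDerivAt f (f' t) t) (hint : IntegrableOn f' (Ioi a))
    (hl : Tendsto f (𝓝[>] a) (𝓝 l)) (hm : Tendsto f atTop (𝓝 m)) :
    ∫ t in Ioi a, f' t = m - l := by
  have hab : a < a + 1 := lt_add_one a
  have hnear : ∫ t in Ioc a (a + 1), f' t = f (a + 1) - l := by
    rw [← intervalIntegral.integral_of_le hab.le]
    refine intervalIntegral.integral_eq_sub_of_hasDerivAt_of_tendsto hab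
      (fun t ht => hderiv t ht.1) ?_ hl ?_
    · exact (intervalIntegrable_iff_integrableOn_Ioc_of_le hab.le).2
        (hint.mono_set Ioc_subset_Ioi_self)
    · exact (hderiv _ hab).continuousAt.tendsto.mono_left nhdsWithin_le_nhds
  have hfar : ∫ t in Ioi (a + 1), f' t = m - f (a + 1) :=
    integral_Ioi_of_hasDerivAt_of_tendsto (hderiv _ hab).continuousAt.continuousWithinAt
      (fun t ht => hderiv t (hab.trans ht)) (hint.mono_set (Ioi_subset_Ioi hab.le)) hm
  rw [← Ioc_union_Ioi_eq_Ioi hab.le, setIntegral_union (Ioc_disjoint_Ioi le_rfl) measurableSet_Ioi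
    (hint.mono_set Ioc_subset_Ioi_self) (hint.mono_set (Ioi_subset_Ioi hab.le)), hnear, hfar]
  ring

theorem hasDerivAt_rho (ν : ℝ) {x : ℝ} (hx : 0 < x) :
    HasDerivAt (rho ν) (-rho (ν - 1) x) x := by
  have hderiv : ∀ t ∈ Ioi (0 : ℝ), ∀ y : ℝ,
      HasDerivAt (fun y => t ^ (ν - 1) * exp (-t - y / t))
        (-(t ^ (ν - 1 - 1) * exp (-t - y / t))) y := by
    intro t (ht : 0 < t) y
    refine ((((hasDerivAt_id' y).div_const t).const_sub (-t)).exp.const_mul _).congr_deriv ?_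
    rw [rpow_sub_one ht.ne' (ν - 1)]
    field_simp
  have hbound : ∀ t ∈ Ioi (0 : ℝ), ∀ y ∈ Ioi (x / 2),
      ‖-(t ^ (ν - 1 - 1) * exp (-t - y / t))‖ ≤ t ^ (ν - 1 - 1) * exp (-t - x / 2 / t) := by
    intro t (ht : 0 < t) y (hy : x / 2 < y)
    rw [norm_neg, norm_of_nonneg (by positivity)]
    gcongr
  have key := hasDerivAt_integral_of_dominated_loc_of_deriv_le (μ := volume.restrict (Ioi 0))
    (Ioi_mem_nhds (half_lt_self hx))
    (.of_forall fun y =>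
      (continuousOn_rpow_mul_exp_neg_sub_div _ y).aestronglyMeasurable measurableSet_Ioi)
    (integrableOn_rpow_mul_exp_neg_sub_div _ hx)
    ((continuousOn_rpow_mul_exp_neg_sub_div _ x).aestronglyMeasurable measurableSet_Ioi).neg
    ((ae_restrict_mem measurableSet_Ioi).mono hbound)
    (integrableOn_rpow_mul_exp_neg_sub_div _ (half_pos hx))
    ((ae_restrict_mem measurableSet_Ioi).mono fun t ht y _ => hderiv t ht y)
  rw [integral_neg] at key
  exact key.2

theorem rho_add_one (ν : ℝ) {x : ℝ} (hx : 0 < x) :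
    rho (ν + 1) x = ν * rho ν x + x * rho (ν - 1) x := by
  have hderiv : ∀ t ∈ Ioi (0 : ℝ), HasDerivAt (fun t => t ^ ν * exp (-t - x / t))
      (ν * (t ^ (ν - 1) * exp (-t - x / t)) - t ^ ν * exp (-t - x / t)
        + x * (t ^ (ν - 1 - 1) * exp (-t - x / t))) t := by
    intro t (ht : 0 < t)
    have hexponent : HasDerivAt (fun t => -t - x / t) (-1 + x / t ^ 2) t := by
      simp only [div_eq_mul_inv]
      exact ((hasDerivAt_neg' t).fun_sub ((hasDerivAt_inv ht.ne').const_mul x)).congr_deriv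
        (by ring)
    refine ((hasDerivAt_rpow_const (Or.inl ht.ne')).mul hexponent.exp).congr_deriv ?_
    rw [rpow_sub_one ht.ne' (ν - 1), rpow_sub_one ht.ne' ν]
    field_simp
    ring
  have hint := fun a => integrableOn_rpow_mul_exp_neg_sub_div a hx
  have hint_sub : IntegrableOn
      (fun t => ν * (t ^ (ν - 1) * exp (-t - x / t)) - t ^ ν * exp (-t - x / t)) (Ioi 0) :=
    ((hint _).const_mul ν).sub (hint _)
  have hparts := integral_Ioi_of_hasDerivAt_of_tendsto_nhdsGT hderiv
    (hint_sub.add ((hint _).const_mul x))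
    (tendsto_rpow_mul_exp_neg_sub_div_nhdsGT_zero ν hx)
    (tendsto_rpow_mul_exp_neg_sub_div_atTop ν x)
  rw [integral_add hint_sub ((hint _).const_mul x), integral_sub ((hint _).const_mul ν) (hint _),
    integral_const_mul, integral_const_mul] at hparts
  simp only [rho, add_sub_cancel_right]
  linarith

theorem rpow_mul_deriv_rpow_neg_mul_rho (ν : ℝ) {y : ℝ} (hy : 0 < y) :
    y ^ (ν + 1) * deriv (fun z => z ^ (-ν) * rho ν z) y =
      -ν * rho ν y - y * rho (ν - 1) y := by
  rw [((hasDerivAt_rpow_const (Or.inl hy.ne')).fun_mul (hasDerivAt_rho ν hy)).deriv,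
    rpow_sub_one hy.ne', rpow_neg hy.le, rpow_add_one hy.ne']
  field_simp
  ring

theorem rho_second_order_ode (ν x : ℝ) (hx : 0 < x) :
    HasDerivAt (fun y => y ^ (ν + 1) * deriv (fun z => z ^ (-ν) * rho ν z) y) (rho ν x) x := by
  have hrec := rho_add_one (ν - 1) hx
  rw [sub_add_cancel] at hrec
  have hflux : HasDerivAt (fun y => -ν * rho ν y - y * rho (ν - 1) y) (rho ν x) x :=
    (((hasDerivAt_rho ν hx).const_mul (-ν)).sub
      ((hasDerivAt_id' x).mul (hasDerivAt_rho (ν - 1) hx))).congr_deriv (by rw [hrec]; ring)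
  exact hflux.congr_of_eventuallyEq <|
    eventually_of_mem (Ioi_mem_nhds hx) fun y hy => rpow_mul_deriv_rpow_neg_mul_rho ν hy
end

section
/- Let ν ≥ 0 and α > -1, and let p(x) = x³ + a₁x² + a₂x + a₃ be the monic cubic satisfying ∫₀^∞ p(x) x^(k+α) ρ_ν(x) dx = 0 for k = 0,1 and ∫₀^∞ p(x) x^α ρ_(ν+1)(x) dx = 0. Then its constant coefficient is a₃ = -(3+α+ν)(2+α+ν)(1+α+ν)(3+α)(2+α)(1+α). -/
/-!
By Tonelli, `∫ x^μ ρ_ν(x) dx = ∫ t^(ν-1) e^(-t) (∫ x^μ e^(-x/t) dx) dt`, and the inner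
integral is `t^(μ+1) Γ(μ+1)`; so the moments are `m_ν(μ) = Γ(μ+ν+1) Γ(μ+1)` and satisfy
`m_ν(μ+1) = (μ+1)(μ+ν+1) m_ν(μ)`. Dividing each orthogonality condition by the positive
moment `m_ν(c)` at its lowest exponent turns it into a linear equation in `a₁, a₂, a₃` whose
coefficients are products of `c+j` and `c+ν+j`; eliminating `a₁` and `a₂` from the three
equations leaves `a₃`.
-/

open MeasureTheory Real Set

noncomputable def rhoIntegrand (ν x t : ℝ) : ℝ :=
  t ^ (ν - 1) * exp (-t - x / t)

lemma rho_eq_integral_rhoIntegrand (ν x : ℝ) : rho ν x = ∫ t in Ioi 0, rhoIntegrand ν x t :=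
  rfl

lemma rhoIntegrand_eq (ν x t : ℝ) :
    rhoIntegrand ν x t = t ^ (ν - 1) * exp (-t) * exp (-(x / t)) := by
  rw [rhoIntegrand, mul_assoc, ← exp_add]
  congr 2

lemma measurable_rpow_mul_rhoIntegrand (ν μ : ℝ) :
    Measurable fun p : ℝ × ℝ => p.1 ^ μ * rhoIntegrand ν p.1 p.2 := by
  unfold rhoIntegrand; fun_prop

lemma integrableOn_rpow_mul_exp_neg_div {μ t : ℝ} (hμ : -1 < μ) (ht : 0 < t) :
    IntegrableOn (fun x : ℝ => x ^ μ * exp (-(x / t))) (Ioi 0) := by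
  simpa [div_eq_inv_mul] using integrableOn_rpow_mul_exp_neg_mul_rpow hμ one_pos (inv_pos.2 ht)

lemma integral_rpow_mul_exp_neg_div {μ t : ℝ} (hμ : -1 < μ) (ht : 0 < t) :
    ∫ x in Ioi 0, x ^ μ * exp (-(x / t)) = t ^ (μ + 1) * Gamma (μ + 1) := by
  simpa [div_eq_inv_mul] using
    integral_rpow_mul_exp_neg_mul_Ioi (a := μ + 1) (by linarith) (inv_pos.2 ht)

lemma integral_rpow_mul_rhoIntegrand {ν μ t : ℝ} (hμ : -1 < μ) (ht : 0 < t) :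
    ∫ x in Ioi 0, x ^ μ * rhoIntegrand ν x t
      = Gamma (μ + 1) * (exp (-t) * t ^ (μ + ν + 1 - 1)) := by
  rw [show μ + ν + 1 - 1 = (ν - 1) + (μ + 1) by ring, rpow_add ht]
  simp_rw [rhoIntegrand_eq, mul_left_comm _ (t ^ (ν - 1) * exp (-t)), integral_const_mul,
    integral_rpow_mul_exp_neg_div hμ ht]
  ring

lemma integrable_rpow_mul_rhoIntegrand {ν μ : ℝ} (hμ : -1 < μ) (hμν : -1 < μ + ν) :
    Integrable (fun p : ℝ × ℝ => p.1 ^ μ * rhoIntegrand ν p.1 p.2)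
      ((volume.restrict (Ioi 0)).prod (volume.restrict (Ioi 0))) := by
  refine (integrable_prod_iff' (measurable_rpow_mul_rhoIntegrand ν μ).aestronglyMeasurable).2 ⟨?_, ?_⟩
  · filter_upwards [ae_restrict_mem measurableSet_Ioi] with t (ht : 0 < t)
    simp_rw [rhoIntegrand_eq, mul_left_comm _ (t ^ (ν - 1) * exp (-t))]
    exact (integrableOn_rpow_mul_exp_neg_div hμ ht).const_mul _
  · have hΓ :=
      (GammaIntegral_convergent (by linarith : 0 < μ + ν + 1)).const_mul (Gamma (μ + 1))
    refine IntegrableOn.congr_fun hΓ (fun t (ht : 0 < t) => ?_) measurableSet_Ioi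
    rw [← integral_rpow_mul_rhoIntegrand hμ ht]
    refine setIntegral_congr_fun measurableSet_Ioi fun x (hx : 0 < x) => ?_
    exact (Real.norm_of_nonneg (by unfold rhoIntegrand; positivity)).symm

lemma integrableOn_rpow_mul_rho {ν μ : ℝ} (hμ : -1 < μ) (hμν : -1 < μ + ν) :
    IntegrableOn (fun x => x ^ μ * rho ν x) (Ioi 0) := by
  simpa only [IntegrableOn, rho_eq_integral_rhoIntegrand, ← integral_const_mul] using
    (integrable_rpow_mul_rhoIntegrand hμ hμν).integral_prod_left

lemma integral_rpow_mul_rho {ν μ : ℝ} (hμ : -1 < μ) (hμν : -1 < μ + ν) :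
    ∫ x in Ioi 0, x ^ μ * rho ν x = Gamma (μ + ν + 1) * Gamma (μ + 1) :=
  calc ∫ x in Ioi 0, x ^ μ * rho ν x
      = ∫ x in Ioi 0, ∫ t in Ioi 0, x ^ μ * rhoIntegrand ν x t := by
        simp only [rho_eq_integral_rhoIntegrand, integral_const_mul]
    _ = ∫ t in Ioi 0, ∫ x in Ioi 0, x ^ μ * rhoIntegrand ν x t :=
        integral_integral_swap (integrable_rpow_mul_rhoIntegrand hμ hμν)
    _ = ∫ t in Ioi 0, Gamma (μ + 1) * (exp (-t) * t ^ (μ + ν + 1 - 1)) :=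
        setIntegral_congr_fun measurableSet_Ioi fun t ht => integral_rpow_mul_rhoIntegrand hμ ht
    _ = Gamma (μ + ν + 1) * Gamma (μ + 1) := by
        rw [integral_const_mul, ← Gamma_eq_integral (by linarith), mul_comm]

lemma integral_rpow_add_one_mul_rho {ν μ : ℝ} (hμ : -1 < μ) (hμν : -1 < μ + ν) :
    ∫ x in Ioi 0, x ^ (μ + 1) * rho ν x
      = (μ + 1) * (μ + ν + 1) * ∫ x in Ioi 0, x ^ μ * rho ν x := by
  rw [integral_rpow_mul_rho (by linarith) (by linarith), integral_rpow_mul_rho hμ hμν,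
    show μ + 1 + ν + 1 = μ + ν + 1 + 1 by ring, Gamma_add_one (s := μ + ν + 1) (by linarith),
    Gamma_add_one (s := μ + 1) (by linarith)]
  ring

lemma integral_rpow_mul_rho_pos {ν μ : ℝ} (hμ : -1 < μ) (hμν : -1 < μ + ν) :
    0 < ∫ x in Ioi 0, x ^ μ * rho ν x := by
  rw [integral_rpow_mul_rho hμ hμν]
  exact mul_pos (Gamma_pos_of_pos (by linarith)) (Gamma_pos_of_pos (by linarith))

lemma integral_cubic_mul_rpow_mul_rho {ν c : ℝ} (a₁ a₂ a₃ : ℝ) (hc : -1 < c)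
    (hcν : -1 < c + ν) :
    ∫ x in Ioi 0, (x ^ 3 + a₁ * x ^ 2 + a₂ * x + a₃) * x ^ c * rho ν x
      = (∫ x in Ioi 0, x ^ c * rho ν x) *
        ((c + 1) * (c + 2) * (c + 3) * (c + ν + 1) * (c + ν + 2) * (c + ν + 3)
          + a₁ * ((c + 1) * (c + 2) * (c + ν + 1) * (c + ν + 2))
          + a₂ * ((c + 1) * (c + ν + 1)) + a₃) := by
  have m (k : ℝ) (hk : 0 ≤ k) :
      Integrable (fun x => x ^ (c + k) * rho ν x) (volume.restrict (Ioi 0)) :=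
    integrableOn_rpow_mul_rho (by linarith) (by linarith)
  have m3 := m 3 (by norm_num)
  have m2 := m 2 (by norm_num)
  have m1 := m 1 (by norm_num)
  have m0 : Integrable (fun x => x ^ c * rho ν x) (volume.restrict (Ioi 0)) :=
    integrableOn_rpow_mul_rho hc hcν
  calc ∫ x in Ioi 0, (x ^ 3 + a₁ * x ^ 2 + a₂ * x + a₃) * x ^ c * rho ν x
      = ∫ x in Ioi 0, (x ^ (c + 3) * rho ν x + a₁ * (x ^ (c + 2) * rho ν x)
          + a₂ * (x ^ (c + 1) * rho ν x) + a₃ * (x ^ c * rho ν x)) := by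
        refine setIntegral_congr_fun measurableSet_Ioi fun x (hx : 0 < x) => ?_
        norm_num [rpow_add hx]
        ring
    _ = (∫ x in Ioi 0, x ^ (c + 3) * rho ν x) + a₁ * (∫ x in Ioi 0, x ^ (c + 2) * rho ν x)
          + a₂ * (∫ x in Ioi 0, x ^ (c + 1) * rho ν x)
          + a₃ * ∫ x in Ioi 0, x ^ c * rho ν x := by
        rw [integral_add, integral_add, integral_add, integral_const_mul, integral_const_mul,
          integral_const_mul]
        all_goals fun_prop
    _ = _ := by
        rw [show c + 3 = c + 2 + 1 by ring,
          integral_rpow_add_one_mul_rho (by linarith) (by linarith),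
          show c + 2 = c + 1 + 1 by ring,
          integral_rpow_add_one_mul_rho (by linarith) (by linarith),
          integral_rpow_add_one_mul_rho hc hcν]
        ring

lemma eq_zero_of_integral_cubic_mul_rpow_mul_rho_eq_zero {ν c a₁ a₂ a₃ : ℝ} (hc : -1 < c)
    (hcν : -1 < c + ν)
    (h : ∫ x in Ioi 0, (x ^ 3 + a₁ * x ^ 2 + a₂ * x + a₃) * x ^ c * rho ν x = 0) :
    (c + 1) * (c + 2) * (c + 3) * (c + ν + 1) * (c + ν + 2) * (c + ν + 3)
      + a₁ * ((c + 1) * (c + 2) * (c + ν + 1) * (c + ν + 2))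
      + a₂ * ((c + 1) * (c + ν + 1)) + a₃ = 0 := by
  rw [integral_cubic_mul_rpow_mul_rho a₁ a₂ a₃ hc hcν] at h
  exact (mul_eq_zero.1 h).resolve_left (integral_rpow_mul_rho_pos hc hcν).ne'

theorem type2_p21_constant_coeff (ν α a₁ a₂ a₃ : ℝ) (hν : 0 ≤ ν) (hα : -1 < α)
    (h1 : ∀ k : ℕ, k ≤ 1 →
      ∫ x in Set.Ioi (0:ℝ),
        (x ^ 3 + a₁ * x ^ 2 + a₂ * x + a₃) * x ^ ((k : ℝ) + α) * rho ν x = 0)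
    (h2 : ∫ x in Set.Ioi (0:ℝ),
        (x ^ 3 + a₁ * x ^ 2 + a₂ * x + a₃) * x ^ α * rho (ν + 1) x = 0) :
    a₃ = -(3 + α + ν) * (2 + α + ν) * (1 + α + ν) * (3 + α) * (2 + α) * (1 + α) := by
  have h10 := h1 0 zero_le_one
  have h11 := h1 1 le_rfl
  simp only [Nat.cast_zero, zero_add, Nat.cast_one] at h10 h11
  have e0 := eq_zero_of_integral_cubic_mul_rpow_mul_rho_eq_zero hα (by linarith) h10
  have e1 := eq_zero_of_integral_cubic_mul_rpow_mul_rho_eq_zero (by linarith) (by linarith) h11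
  have e2 := eq_zero_of_integral_cubic_mul_rpow_mul_rho_eq_zero hα (by linarith) h2
  linear_combination (2 + α + ν) * (3 + α + ν) / 2 * e0 + (1 + α) * (1 + α + ν) / 2 * e1
    - (5 + 2 * α + ν) * (1 + α + ν) / 2 * e2
end
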